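/- Let T ∈ GL_d(ℂ) be unipotent and act on projective space ℙ^{d−1} by [v] ↦ [Tv]. If for a point [v] ∈ ℙ^{d−1} there is a subsequence n_k → ∞ with T^{n_k}·[v] → [v], then Tv = v. -/
import Mathlib


open Matrix Filter Topology

noncomputable instance {K V : Type*} [DivisionRing K] [AddCommGroup V] [Module K V]
    [TopologicalSpace V] : TopologicalSpace (Projectivization K V) :=
  inferInstanceAs (TopologicalSpace (Quotient (projectivizationSetoid K V)))

lemma choose_fact_aux (nn j : ℕ) :
    ∀ k, j + k ≤ nn →
      nn.choose j * j.factorial * (nn + 1 - (j + k)) ^ k ≤ nn.choose (j + k) * (j + k).factorial := by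
  intro k
  induction k with
  | zero => simp
  | succ k ih =>
    intro h
    have h' : j + k ≤ nn := by omega
    have e1 : nn + 1 - (j + (k + 1)) = nn - (j + k) := by omega
    calc nn.choose j * j.factorial * (nn + 1 - (j + (k + 1))) ^ (k + 1)
        = nn.choose j * j.factorial * (nn - (j + k)) ^ k * (nn - (j + k)) := by
          rw [e1, pow_succ]; ring
      _ ≤ nn.choose j * j.factorial * (nn + 1 - (j + k)) ^ k * (nn - (j + k)) := by
          gcongr <;> omega
      _ ≤ nn.choose (j + k) * (j + k).factorial * (nn - (j + k)) :=
          Nat.mul_le_mul_right _ (ih h')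
      _ = nn.choose (j + k) * (nn - (j + k)) * (j + k).factorial := by ring
      _ = nn.choose (j + (k + 1)) * (j + k + 1) * (j + k).factorial := by
          rw [show j + (k+1) = j + k + 1 by ring, ← Nat.choose_succ_right_eq]
      _ = nn.choose (j + (k + 1)) * (j + (k + 1)).factorial := by
          rw [show j + (k+1) = (j+k)+1 by ring, Nat.factorial_succ]; ring

lemma choose_ratio_bound {j m nn : ℕ} (hj : j < m) (hm : m ≤ nn) :
    nn.choose j * (nn + 1 - m) ≤ nn.choose m * m.factorial := by
  obtain ⟨k, rfl⟩ := Nat.exists_eq_add_of_le hj.le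
  have h := choose_fact_aux nn j k (by omega)
  calc nn.choose j * (nn + 1 - (j + k))
      ≤ nn.choose j * j.factorial * (nn + 1 - (j + k)) ^ k := by
        have h1 : 1 ≤ j.factorial := Nat.one_le_iff_ne_zero.mpr (Nat.factorial_ne_zero j)
        have h2 : (nn + 1 - (j + k)) ≤ (nn + 1 - (j + k)) ^ k :=
          Nat.le_self_pow (by omega) _
        calc nn.choose j * (nn + 1 - (j + k)) ≤ nn.choose j * (nn + 1 - (j+k)) ^ k := by gcongr
          _ ≤ nn.choose j * j.factorial * (nn + 1 - (j+k)) ^ k := by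
              rw [mul_assoc]; gcongr; nlinarith [Nat.choose_pos (show j ≤ nn by omega)]
      _ ≤ nn.choose (j + k) * (j + k).factorial := h

lemma choose_ratio_tendsto {j m : ℕ} (hj : j < m) :
    Tendsto (fun nn : ℕ => (nn.choose j : ℝ) / (nn.choose m : ℝ)) atTop (𝓝 0) := by
  have hb : Tendsto (fun nn : ℕ => (m.factorial : ℝ) / ((nn : ℝ) + 1 - m)) atTop (𝓝 0) := by
    apply Tendsto.div_atTop tendsto_const_nhds
    have : Tendsto (fun nn : ℕ => (nn : ℝ)) atTop atTop := tendsto_natCast_atTop_atTop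
    have := tendsto_atTop_add_const_right atTop (1 - (m:ℝ)) tendsto_natCast_atTop_atTop
    exact this.congr (fun nn => by ring)
  refine squeeze_zero' ?_ ?_ hb
  · filter_upwards [eventually_ge_atTop m] with nn hnn
    positivity
  · filter_upwards [eventually_ge_atTop m] with nn hnn
    have hcm : 0 < (nn.choose m : ℝ) := by exact_mod_cast Nat.choose_pos hnn
    have hden : (0:ℝ) < (nn:ℝ) + 1 - m := by
      have : (m:ℝ) ≤ nn := by exact_mod_cast hnn
      linarith
    rw [div_le_div_iff₀ hcm hden, mul_comm (m.factorial:ℝ)]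
    have := choose_ratio_bound hj hnn
    have hcast : ((nn + 1 - m : ℕ) : ℝ) = (nn : ℝ) + 1 - m := by
      rw [Nat.cast_sub (by omega)]; push_cast; ring
    calc (nn.choose j : ℝ) * ((nn:ℝ) + 1 - m) = ((nn.choose j * (nn + 1 - m) : ℕ) : ℝ) := by
          rw [Nat.cast_mul, hcast]
      _ ≤ ((nn.choose m * m.factorial : ℕ) : ℝ) := by exact_mod_cast this
      _ = (nn.choose m : ℝ) * m.factorial := by push_cast; ring


/-- If `T ∈ GL_d(ℂ)` is unipotent (i.e. `(T - I)^d = 0`) and for some nonzero `v` there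
is a subsequence `n_k → ∞` with `T^{n_k}·[v] → [v]` in projective space, then `Tv = v`.
(Unipotence of `T` implies each `T^n` is invertible, so `T^n v ≠ 0`; this is recorded as
the hypothesis `hvn` which supplies the representatives of the projective points.) -/
theorem fixed_of_projective_recurrence (d : ℕ) (T : Matrix (Fin d) (Fin d) ℂ)
    (hT : (T - 1) ^ d = 0) (v : Fin d → ℂ) (hv : v ≠ 0)
    (hvn : ∀ n : ℕ, (T ^ n).mulVec v ≠ 0)
    (n : ℕ → ℕ) (hn : StrictMono n)
    (hconv : Tendsto
      (fun k => Projectivization.mk ℂ ((T ^ n k).mulVec v) (hvn (n k)))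
      atTop (𝓝 (Projectivization.mk ℂ v hv))) :
    T.mulVec v = v := by
  classical
  set N : Matrix (Fin d) (Fin d) ℂ := T - 1 with hN
  -- the binomial expansion
  have hbin : ∀ nn : ℕ, (T ^ nn).mulVec v
      = ∑ j ∈ Finset.range (nn + 1), (nn.choose j : ℂ) • (N ^ j).mulVec v := by
    intro nn
    have hT' : T = N + 1 := by rw [hN]; abel
    have hc : Commute N (1 : Matrix (Fin d) (Fin d) ℂ) := Commute.one_right N
    have := hc.add_pow nn
    rw [hT', this]
    have hs := map_sum (AddMonoidHom.mk' (fun M : Matrix (Fin d) (Fin d) ℂ => M.mulVec v)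
      (fun A B => Matrix.add_mulVec A B v))
      (fun m => N ^ m * 1 ^ (nn - m) * ((nn.choose m : ℕ) : Matrix (Fin d) (Fin d) ℂ))
      (Finset.range (nn + 1))
    simp only [AddMonoidHom.mk'_apply] at hs
    rw [hs]
    apply Finset.sum_congr rfl
    intro j hj
    simp only [one_pow, mul_one]
    rw [← (Nat.cast_commute (nn.choose j) (N ^ j)).eq, ← nsmul_eq_mul,
      ← Nat.cast_smul_eq_nsmul ℂ, Matrix.smul_mulVec]
  -- maximal m with N^m v ≠ 0
  have hd0 : 0 < d := by
    rcases Nat.eq_zero_or_pos d with h | h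
    · exact absurd (funext fun i => absurd i.2 (by omega)) hv
    · exact h
  set P : ℕ → Prop := fun k => (N ^ k).mulVec v ≠ 0 with hPdef
  have hP0 : P 0 := by simpa [P, Matrix.one_mulVec] using hv
  set m : ℕ := Nat.findGreatest P d with hmdef
  have hPm : P m := Nat.findGreatest_spec (Nat.zero_le d) hP0
  have hmd : m ≤ d := Nat.findGreatest_le d
  have hPd : ¬ P d := by simp [P, hT, Matrix.zero_mulVec]
  have hmlt : m < d := lt_of_le_of_ne hmd (fun h => hPd (h ▸ hPm))
  have hPm1 : (N ^ (m + 1)).mulVec v = 0 := by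
    by_contra h
    exact Nat.findGreatest_is_greatest (Nat.lt_succ_self m) (by omega) h
  have hNj : ∀ j, m < j → (N ^ j).mulVec v = 0 := by
    intro j hj
    have hpow : N ^ j = N ^ (j - (m + 1)) * N ^ (m + 1) := by
      rw [← pow_add]; congr 1; omega
    rw [hpow, ← Matrix.mulVec_mulVec, hPm1, Matrix.mulVec_zero]
  rcases Nat.eq_zero_or_pos m with hm0 | hm1
  · have h1 : (N ^ (0 + 1)).mulVec v = 0 := hm0 ▸ hPm1
    rw [zero_add, pow_one, hN, Matrix.sub_mulVec, Matrix.one_mulVec, sub_eq_zero] at h1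
    exact h1
  exfalso
  set u : Fin d → ℂ := (N ^ m).mulVec v with hudef
  have hu : u ≠ 0 := hPm
  have husp : u ∉ Submodule.span ℂ {v} := by
    intro hmem
    obtain ⟨c, hc⟩ := Submodule.mem_span_singleton.mp hmem
    have hc0 : c ≠ 0 := fun h => hu (by rw [← hc, h, zero_smul])
    have h2m : (N ^ (2 * m)).mulVec v = (c * c) • v := by
      rw [two_mul, pow_add, ← Matrix.mulVec_mulVec, ← hudef, ← hc, Matrix.mulVec_smul,
        ← hudef, ← hc, smul_smul]
    rw [hNj (2 * m) (by omega)] at h2m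
    exact hv (by simpa [hc0] using (smul_eq_zero.mp h2m.symm))
  obtain ⟨f, hfu, hfmap⟩ :=
    Submodule.exists_dual_map_eq_bot_of_notMem husp inferInstance
  have hfv : f v = 0 := by
    have h := Submodule.mem_map_of_mem (f := f) (Submodule.mem_span_singleton_self v)
    rw [hfmap] at h
    simpa using h
  -- the vector-space limit
  have hkey : Tendsto (fun nn => ((nn.choose m : ℂ))⁻¹ • (T ^ nn).mulVec v) atTop (𝓝 u) := by
    have hrat : ∀ j, j < m →
        Tendsto (fun nn : ℕ => ((nn.choose j : ℂ) / (nn.choose m : ℂ))) atTop (𝓝 0) := by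
      intro j hj
      have := (Complex.continuous_ofReal.tendsto 0).comp (choose_ratio_tendsto hj)
      simp only [Function.comp_def, Complex.ofReal_div, Complex.ofReal_natCast,
        Complex.ofReal_zero] at this
      exact this
    have hsum : Tendsto (fun nn : ℕ => ∑ j ∈ Finset.range (m + 1),
        ((nn.choose j : ℂ) / (nn.choose m : ℂ)) • (N ^ j).mulVec v) atTop (𝓝 u) := by
      have h1 : Tendsto (fun nn : ℕ => ∑ j ∈ Finset.range m,
          ((nn.choose j : ℂ) / (nn.choose m : ℂ)) • (N ^ j).mulVec v) atTop (𝓝 0) := by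
        have := tendsto_finset_sum (Finset.range m)
          (fun j hj => (hrat j (Finset.mem_range.mp hj)).smul_const ((N ^ j).mulVec v))
        simpa using this
      have h2 : Tendsto (fun nn : ℕ =>
          ((nn.choose m : ℂ) / (nn.choose m : ℂ)) • (N ^ m).mulVec v) atTop (𝓝 u) := by
        apply Tendsto.congr' _ tendsto_const_nhds
        filter_upwards [eventually_ge_atTop m] with nn hnn
        have : (nn.choose m : ℂ) ≠ 0 := Nat.cast_ne_zero.mpr (Nat.choose_pos hnn).ne'
        rw [div_self this, one_smul, hudef]
      have := h1.add h2
      rw [zero_add] at this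
      exact this.congr (fun nn => (Finset.sum_range_succ _ m).symm)
    apply Tendsto.congr' _ hsum
    filter_upwards [eventually_ge_atTop m] with nn hnn
    rw [hbin nn, Finset.smul_sum]
    rw [← Finset.sum_subset (Finset.range_subset_range.mpr (by omega : m + 1 ≤ nn + 1))
      (fun j _ hj => by simp [hNj j (by simpa using hj)])]
    apply Finset.sum_congr rfl
    intro j _
    rw [smul_smul, div_eq_inv_mul]
  have hfc : Continuous f := LinearMap.continuous_of_finiteDimensional f
  have hnu : ‖u‖ ≠ 0 := norm_ne_zero_iff.mpr hu
  -- scaling invariance of the ratio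
  have hscale : ∀ (c : ℂ), c ≠ 0 → ∀ x : Fin d → ℂ,
      ‖f (c • x)‖ / ‖c • x‖ = ‖f x‖ / ‖x‖ := by
    intro c hc x
    rw [_root_.map_smul, smul_eq_mul, norm_mul, norm_smul,
      mul_div_mul_left _ _ (norm_ne_zero_iff.mpr hc)]
  have hlim2 : Tendsto (fun nn => ‖f ((T ^ nn).mulVec v)‖ / ‖(T ^ nn).mulVec v‖)
      atTop (𝓝 (‖f u‖ / ‖u‖)) := by
    have h1 : Tendsto (fun nn => ‖f (((nn.choose m : ℂ))⁻¹ • (T ^ nn).mulVec v)‖ /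
        ‖((nn.choose m : ℂ))⁻¹ • (T ^ nn).mulVec v‖) atTop (𝓝 (‖f u‖ / ‖u‖)) :=
      Tendsto.div (((hfc.tendsto u).comp hkey).norm) hkey.norm hnu
    apply h1.congr'
    filter_upwards [eventually_ge_atTop m] with nn hnn
    have hc : ((nn.choose m : ℂ))⁻¹ ≠ 0 :=
      inv_ne_zero (Nat.cast_ne_zero.mpr (Nat.choose_pos hnn).ne')
    exact hscale _ hc _
  have hlim3 : Tendsto (fun k => ‖f ((T ^ n k).mulVec v)‖ / ‖(T ^ n k).mulVec v‖)
      atTop (𝓝 (‖f u‖ / ‖u‖)) := hlim2.comp hn.tendsto_atTop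
  -- the continuous function on projective space
  set g : {x : Fin d → ℂ // x ≠ 0} → ℝ := fun x => ‖f x.1‖ / ‖x.1‖ with hgdef
  have hg : ∀ a b : {x : Fin d → ℂ // x ≠ 0},
      (projectivizationSetoid ℂ (Fin d → ℂ)).r a b → g a = g b := by
    rintro a b ⟨c, hc⟩
    have hc' : (c : ℂ) • b.1 = a.1 := hc
    rw [hgdef]
    dsimp only
    rw [← hc', hscale _ c.ne_zero _]
  have hgc : Continuous g :=
    Continuous.div ((hfc.comp continuous_subtype_val).norm)
      (continuous_subtype_val.norm) (fun x => norm_ne_zero_iff.mpr x.2)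
  have hφc : Continuous (Quotient.lift g hg : Projectivization ℂ (Fin d → ℂ) → ℝ) :=
    hgc.quotient_lift hg
  have hlim4 := (hφc.tendsto _).comp hconv
  have hzero : Quotient.lift g hg (Projectivization.mk ℂ v hv) = 0 := by
    show g ⟨v, hv⟩ = 0
    rw [hgdef]
    dsimp only
    rw [hfv, norm_zero, zero_div]
  rw [hzero] at hlim4
  have hlim4' : Tendsto (fun k => ‖f ((T ^ n k).mulVec v)‖ / ‖(T ^ n k).mulVec v‖)
      atTop (𝓝 0) := hlim4
  have := tendsto_nhds_unique hlim3 hlim4'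
  rw [div_eq_zero_iff] at this
  rcases this with h | h
  · exact hfu (norm_eq_zero.mp h)
  · exact hnu h
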